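/- Suppose S = ⟨C, ≺, g⟩ is a pseudo-distance on 𝒱 such that V |_S W = V | W for all V, W ⊆ 𝒱, where | is the modified Hamster-Wheel operator. Then for every i ∈ [1, m−1], g(v_i, w_i) = g(v_{i+1}, w_{i+1}). -/

import Mathlib

/-! For adjacent indices `i, j` neither `{v_j}` nor `{v_i, v_j}` is an exceptional argument of the
modified operator, so `1.4 < 2` gives `{v_j} | {w_i, w_j} = {w_j}` and
`{v_i, v_j} | {w_i, w_j} = {w_i, w_j}`. The first says that
`g(v_j, w_i) ⪯ g(v_j, w_j)` fails, so in the second `w_i` can only be selected through `v_i`, which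
forces `g(v_i, w_i) ⪯ g(v_j, w_j)`. Exchanging `i` and `j` and using antisymmetry of `⪯` gives
equality. -/

/-- `lt` is a strict total order on `C`. -/
def StrictTotalOrder' {C : Type*} (lt : C → C → Prop) : Prop :=
  (∀ c, ¬ lt c c) ∧ (∀ a b c, lt a b → lt b c → lt a c) ∧
  (∀ a b, a ≠ b → lt a b ∨ lt b a)

/-- The operator induced by a pseudo-distance `⟨C, lt, d⟩`:
`V |_D W = {w ∈ W : ∃ v ∈ V, ∀ v' ∈ V, ∀ w' ∈ W, d(v,w) ⪯ d(v',w')}`. -/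
def inducedOp {𝒱 C : Type*} (lt : C → C → Prop) (d : 𝒱 → 𝒱 → C)
    (A B : Set 𝒱) : Set 𝒱 :=
  {w ∈ B | ∃ v ∈ A, ∀ v' ∈ A, ∀ w' ∈ B, lt (d v w) (d v' w') ∨ d v w = d v' w'}

/-- The elements `v 1, …, v m, w 1, …, w m` are `2m` pairwise distinct elements. -/
def hwDistinct {𝒱 : Type*} (m : ℕ) (v w : ℕ → 𝒱) : Prop :=
  (∀ i ∈ Set.Icc 1 m, ∀ j ∈ Set.Icc 1 m, v i ≠ w j) ∧
  (∀ i ∈ Set.Icc 1 m, ∀ j ∈ Set.Icc 1 m, v i = v j → i = j) ∧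
  (∀ i ∈ Set.Icc 1 m, ∀ j ∈ Set.Icc 1 m, w i = w j → i = j)

/-- `X = {v 1, …, v m, w 1, …, w m}`. -/
def hwX {𝒱 : Type*} (m : ℕ) (v w : ℕ → 𝒱) : Set 𝒱 :=
  {x | ∃ i ∈ Set.Icc 1 m, x = v i ∨ x = w i}

open Classical in
/-- The Hamster-Wheel pseudo-distance `d : 𝒱 × 𝒱 → ℝ`. -/
noncomputable def hwD {𝒱 : Type*} (m : ℕ) (v w : ℕ → 𝒱) (a b : 𝒱) : ℝ :=
  if a = b then 0
  else if ¬ (({a, b} : Set 𝒱) ⊆ hwX m v w) then 1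
  else if (∃ i ∈ Set.Icc 1 m, ∃ j ∈ Set.Icc 1 m, a = v i ∧ b = v j) ∨
      (∃ i ∈ Set.Icc 1 m, ∃ j ∈ Set.Icc 1 m, a = w i ∧ b = w j) then 1.1
  else if ∃ i ∈ Set.Icc 1 m, ({a, b} : Set 𝒱) = {v i, w i} then 1.4
  else if ∃ i ∈ Set.Icc 1 m, ∃ j ∈ Set.Icc 1 m,
      ({a, b} : Set 𝒱) = {v i, w j} ∧ ((i : ℤ) - j).natAbs ∈ ({1, m - 1} : Set ℕ) then 2
  else 1.2

open Classical in
/-- The modified Hamster-Wheel operator `|` on `𝒫(𝒱)`. -/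
noncomputable def hwOp {𝒱 : Type*} (m : ℕ) (v w : ℕ → 𝒱) (A B : Set 𝒱) : Set 𝒱 :=
  if A = ({v m, v 1} : Set 𝒱) ∧ B = ({w m, w 1} : Set 𝒱) then {w m}
  else if A = ({w m, w 1} : Set 𝒱) ∧ B = ({v m, v 1} : Set 𝒱) then {v m}
  else inducedOp (· < ·) (hwD m v w) A B

section InducedOp

variable {𝒱 C : Type*} {lt : C → C → Prop} {d : 𝒱 → 𝒱 → C}

theorem mem_inducedOp_singleton_pair_iff {a b b' : 𝒱} :
    b' ∈ inducedOp lt d {a} {b, b'} ↔ lt (d a b') (d a b) ∨ d a b' = d a b := by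
  refine ⟨fun ⟨_, _, hx, hmin⟩ => ?_, fun h => ⟨by simp, a, rfl, ?_⟩⟩
  · rw [Set.mem_singleton_iff.mp hx] at hmin
    exact hmin a rfl b (by simp)
  · rintro _ rfl c (rfl | rfl)
    exacts [h, Or.inr rfl]

theorem lt_or_eq_of_mem_inducedOp_pair {a a' b b' : 𝒱} (hb : b ∈ inducedOp lt d {a, a'} {b, b'})
    (h : ¬ (lt (d a' b) (d a' b') ∨ d a' b = d a' b')) :
    lt (d a b) (d a' b') ∨ d a b = d a' b' := by
  obtain ⟨-, x, hx | hx, hmin⟩ := hb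
  · exact hx ▸ hmin a' (by simp) b' (by simp)
  · exact absurd (Set.mem_singleton_iff.mp hx ▸ hmin a' (by simp) b' (by simp)) h

theorem mem_inducedOp_of_forall_le {α : Type*} [PartialOrder α] {d : 𝒱 → 𝒱 → α}
    {A B : Set 𝒱} {a b : 𝒱} (ha : a ∈ A) (hb : b ∈ B) (h : ∀ x ∈ A, ∀ y ∈ B, d a b ≤ d x y) :
    b ∈ inducedOp (· < ·) d A B :=
  ⟨hb, a, ha, fun x hx y hy => (h x hx y hy).lt_or_eq⟩

theorem eq_of_lt_or_eq_of_lt_or_eq (hirr : ∀ c, ¬ lt c c)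
    (htrans : ∀ a b c, lt a b → lt b c → lt a c) {x y : C}
    (hxy : lt x y ∨ x = y) (hyx : lt y x ∨ y = x) : x = y := by
  rcases hxy with hxy | rfl
  · rcases hyx with hyx | rfl
    exacts [absurd (htrans x y x hxy hyx) (hirr x), rfl]
  · rfl

end InducedOp

section HamsterWheel

variable {𝒱 : Type*} {m : ℕ} {v w : ℕ → 𝒱}

theorem hwDistinct.pair_eq_pair_iff (hdist : hwDistinct m v w) {i j k l : ℕ}
    (hi : i ∈ Set.Icc 1 m) (hj : j ∈ Set.Icc 1 m) (hk : k ∈ Set.Icc 1 m) (hl : l ∈ Set.Icc 1 m) :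
    ({v i, w j} : Set 𝒱) = {v k, w l} ↔ i = k ∧ j = l := by
  obtain ⟨hvw, hv, hw⟩ := hdist
  rw [Set.pair_eq_pair_iff]
  constructor
  · rintro (⟨hik, hjl⟩ | ⟨hil, -⟩)
    exacts [⟨hv i hi k hk hik, hw j hj l hl hjl⟩, absurd hil (hvw i hi l hl)]
  · rintro ⟨rfl, rfl⟩
    exact Or.inl ⟨rfl, rfl⟩

theorem hwD_v_w (hdist : hwDistinct m v w) {i j : ℕ} (hi : i ∈ Set.Icc 1 m)
    (hj : j ∈ Set.Icc 1 m) :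
    hwD m v w (v i) (w j) =
      if i = j then 1.4
      else if ((i : ℤ) - j).natAbs ∈ ({1, m - 1} : Set ℕ) then 2 else 1.2 := by
  have hvw := hdist.1
  have hsub : ({v i, w j} : Set 𝒱) ⊆ hwX m v w := by
    rintro x (rfl | rfl)
    exacts [⟨i, hi, Or.inl rfl⟩, ⟨j, hj, Or.inr rfl⟩]
  have hsame : ¬ ((∃ k ∈ Set.Icc 1 m, ∃ l ∈ Set.Icc 1 m, v i = v k ∧ w j = v l) ∨
      (∃ k ∈ Set.Icc 1 m, ∃ l ∈ Set.Icc 1 m, v i = w k ∧ w j = w l)) := by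
    rintro (⟨k, -, l, hl, -, h⟩ | ⟨k, hk, -, -, h, -⟩)
    exacts [hvw l hl j hj h.symm, hvw i hi k hk h]
  unfold hwD
  rw [if_neg (hvw i hi j hj), if_neg (not_not_intro hsub), if_neg hsame]
  by_cases hij : i = j
  · subst hij
    rw [if_pos ⟨i, hi, rfl⟩, if_pos rfl]
  have hdiag : ¬ ∃ k ∈ Set.Icc 1 m, ({v i, w j} : Set 𝒱) = {v k, w k} := by
    rintro ⟨k, hk, h⟩
    obtain ⟨rfl, rfl⟩ := (hdist.pair_eq_pair_iff hi hj hk hk).mp h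
    exact hij rfl
  rw [if_neg hdiag, if_neg hij]
  by_cases hadj : ((i : ℤ) - j).natAbs ∈ ({1, m - 1} : Set ℕ)
  · rw [if_pos ⟨i, hi, j, hj, rfl, hadj⟩, if_pos hadj]
  · rw [if_neg, if_neg hadj]
    rintro ⟨k, hk, l, hl, h, hkl⟩
    obtain ⟨rfl, rfl⟩ := (hdist.pair_eq_pair_iff hi hj hk hl).mp h
    exact hadj hkl

theorem hwOp_eq_inducedOp {A B : Set 𝒱} (hv : A ≠ {v m, v 1}) (hw : A ≠ {w m, w 1}) :
    hwOp m v w A B = inducedOp (· < ·) (hwD m v w) A B := by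
  unfold hwOp
  rw [if_neg (fun h => hv h.1), if_neg (fun h => hw h.1)]

theorem hwD_v_w_self (hdist : hwDistinct m v w) {i : ℕ} (hi : i ∈ Set.Icc 1 m) :
    hwD m v w (v i) (w i) = 1.4 := by
  rw [hwD_v_w hdist hi hi, if_pos rfl]

theorem hwD_v_w_of_natAbs_eq_one (hdist : hwDistinct m v w) {i j : ℕ} (hi : i ∈ Set.Icc 1 m)
    (hj : j ∈ Set.Icc 1 m) (hij : ((i : ℤ) - j).natAbs = 1) :
    hwD m v w (v i) (w j) = 2 := by
  rw [hwD_v_w hdist hi hj, if_neg (by omega), if_pos (Set.mem_insert_iff.mpr (Or.inl hij))]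

theorem hwDistinct.ne_pair_w_of_v_mem (hdist : hwDistinct m v w) {A : Set 𝒱} {i : ℕ}
    (hi : i ∈ Set.Icc 1 m) (h : v i ∈ A) : A ≠ {w m, w 1} := by
  rintro rfl
  rcases h with h | h
  exacts [hdist.1 i hi m ⟨hi.1.trans hi.2, le_rfl⟩ h, hdist.1 i hi 1 ⟨le_rfl, hi.1.trans hi.2⟩ h]

theorem hwDistinct.singleton_ne_pair_v (hdist : hwDistinct m v w) (hm : 1 < m) (x : 𝒱) :
    ({x} : Set 𝒱) ≠ {v m, v 1} := by
  intro h
  have hmx : v m = x := (h ▸ Set.mem_insert (v m) {v 1} : v m ∈ ({x} : Set 𝒱))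
  have h1x : v 1 = x := (h ▸ Set.mem_insert_of_mem (v m) rfl : v 1 ∈ ({x} : Set 𝒱))
  have := hdist.2.1 m ⟨hm.le, le_rfl⟩ 1 ⟨le_rfl, hm.le⟩ (hmx.trans h1x.symm)
  omega

theorem hwDistinct.pair_v_ne_pair_v (hdist : hwDistinct m v w) (hm : m ≠ 2) {i j : ℕ}
    (hi : i ∈ Set.Icc 1 m) (hj : j ∈ Set.Icc 1 m) (hij : ((i : ℤ) - j).natAbs = 1) :
    ({v i, v j} : Set 𝒱) ≠ {v m, v 1} := by
  have hm0 : 1 ≤ m := hi.1.trans hi.2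
  have hm1 : m ∈ Set.Icc 1 m := ⟨hm0, le_rfl⟩
  have h1m : 1 ∈ Set.Icc 1 m := ⟨le_rfl, hm0⟩
  rw [Ne, Set.pair_eq_pair_iff]
  rintro (⟨him, hj1⟩ | ⟨hi1, hjm⟩)
  · rw [hdist.2.1 i hi m hm1 him, hdist.2.1 j hj 1 h1m hj1] at hij
    omega
  · rw [hdist.2.1 i hi 1 h1m hi1, hdist.2.1 j hj m hm1 hjm] at hij
    omega

theorem lt_or_eq_of_inducedOp_eq_hwOp {C : Type*} {lt : C → C → Prop} {g : 𝒱 → 𝒱 → C}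
    (hdist : hwDistinct m v w) (hm : m ≠ 2)
    (heq : ∀ A B : Set 𝒱, inducedOp lt g A B = hwOp m v w A B) {i j : ℕ}
    (hi : i ∈ Set.Icc 1 m) (hj : j ∈ Set.Icc 1 m) (hij : ((i : ℤ) - j).natAbs = 1) :
    lt (g (v i) (w i)) (g (v j) (w j)) ∨ g (v i) (w i) = g (v j) (w j) := by
  have hji : ((j : ℤ) - i).natAbs = 1 := by omega
  have hm1 : 1 < m := by
    rw [Set.mem_Icc] at hi hj
    omega
  have hpair : w i ∈ inducedOp lt g {v i, v j} {w i, w j} := by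
    rw [heq, hwOp_eq_inducedOp (hdist.pair_v_ne_pair_v hm hi hj hij)
      (hdist.ne_pair_w_of_v_mem hi (Set.mem_insert _ _))]
    refine mem_inducedOp_of_forall_le (Set.mem_insert _ _) (Set.mem_insert _ _) ?_
    rintro _ (rfl | rfl) _ (rfl | rfl) <;>
      norm_num [hwD_v_w_self hdist hi, hwD_v_w_self hdist hj,
        hwD_v_w_of_natAbs_eq_one hdist hi hj hij, hwD_v_w_of_natAbs_eq_one hdist hj hi hji]
  have hsingle : ¬ (lt (g (v j) (w i)) (g (v j) (w j)) ∨ g (v j) (w i) = g (v j) (w j)) := by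
    rw [← mem_inducedOp_singleton_pair_iff, heq,
      hwOp_eq_inducedOp (hdist.singleton_ne_pair_v hm1 _) (hdist.ne_pair_w_of_v_mem hj rfl),
      mem_inducedOp_singleton_pair_iff, hwD_v_w_self hdist hj,
      hwD_v_w_of_natAbs_eq_one hdist hj hi hji]
    norm_num
  exact lt_or_eq_of_mem_inducedOp_pair hpair hsingle

end HamsterWheel

theorem stmt5_general {𝒱 : Type*} (m : ℕ) (hm : 4 ≤ m) (v w : ℕ → 𝒱)
    (hdist : hwDistinct m v w)
    {C : Type*} (lt : C → C → Prop) (g : 𝒱 → 𝒱 → C)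
    (hsto : StrictTotalOrder' lt)
    (heq : ∀ A B : Set 𝒱, inducedOp lt g A B = hwOp m v w A B) :
    ∀ i ∈ Set.Icc 1 (m - 1), g (v i) (w i) = g (v (i + 1)) (w (i + 1)) := by
  rintro i ⟨hi1, him⟩
  have hi : i ∈ Set.Icc 1 m := ⟨hi1, by omega⟩
  have hsucc : i + 1 ∈ Set.Icc 1 m := ⟨by omega, by omega⟩
  exact eq_of_lt_or_eq_of_lt_or_eq hsto.1 hsto.2.1
    (lt_or_eq_of_inducedOp_eq_hwOp hdist (by omega) heq hi hsucc (by omega))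
    (lt_or_eq_of_inducedOp_eq_hwOp hdist (by omega) heq hsucc hi (by omega))

/-- If a pseudo-distance `⟨C, lt, g⟩` induces the modified Hamster-Wheel operator, then
`g(v_i, w_i) = g(v_{i+1}, w_{i+1})` for every `i ∈ [1, m-1]`. -/
theorem stmt5 {𝒱 : Type*} (m : ℕ) (hm : 4 ≤ m) (v w : ℕ → 𝒱)
    (hdist : hwDistinct m v w)
    {C : Type*} (lt : C → C → Prop) (g : 𝒱 → 𝒱 → C)
    (hne : Nonempty C) (hsto : StrictTotalOrder' lt)
    (heq : ∀ A B : Set 𝒱, inducedOp lt g A B = hwOp m v w A B) :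
    ∀ i ∈ Set.Icc 1 (m - 1), g (v i) (w i) = g (v (i + 1)) (w (i + 1)) :=
  stmt5_general m hm v w hdist lt g hsto heq
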